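/- arXiv:2410.15081 — 6 statements merged into one kernel-verified Lean document; each statement's English description precedes it below -/
import Mathlib

section
/- Theorem 1 (correctness of probabilistic rewriting): for all terms s, t : A and every selection σ, we have s →_σ* t if and only if there exists a composite choice κ' such that ⟨s, ∅⟩ ⇀* ⟨t, κ'⟩ and σ extends κ'. -/
open scoped Classical

/-- A selection `σ` extends a composite choice `κ` if every atomic choice
recorded in `κ` agrees with `σ`. -/
def Extends {ι : Type*} {C : ι → Type*} (σ : ∀ i, C i) (κ : ∀ i, Option (C i)) : Prop :=
  ∀ i c, κ i = some c → σ i = c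

/-- The probability of a selection: product of the probabilities of its choices. -/
def Psel {ι : Type*} [Fintype ι] {C : ι → Type*} (p : ∀ i, C i → ℝ)
    (σ : ∀ i, C i) : ℝ :=
  ∏ i, p i (σ i)

/-- The probability of a composite choice: product of the probabilities of the
atomic choices it records (unassigned rules contribute 1). -/
def Pcc {ι : Type*} [Fintype ι] {C : ι → Type*} (p : ∀ i, C i → ℝ)
    (κ : ∀ i, Option (C i)) : ℝ :=
  ∏ i, (κ i).elim 1 (p i)

/-- Two composite choices are incompatible if they record different alternatives
for some rule. -/
def Incompatible {ι : Type*} {C : ι → Type*} (κ₁ κ₂ : ∀ i, Option (C i)) : Prop :=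
  ∃ i c₁ c₂, c₁ ≠ c₂ ∧ κ₁ i = some c₁ ∧ κ₂ i = some c₂

/-- A set of composite choices is mutually incompatible if any two distinct
elements are incompatible. -/
def MutuallyIncompatible {ι : Type*} {C : ι → Type*}
    (K : Set (∀ i, Option (C i))) : Prop :=
  ∀ κ₁ ∈ K, ∀ κ₂ ∈ K, κ₁ ≠ κ₂ → Incompatible κ₁ κ₂

/-- `CCSubset κ' κ`: every atomic choice recorded in `κ'` is recorded, with the
same alternative, in `κ`. -/
def CCSubset {ι : Type*} {C : ι → Type*} (κ' κ : ∀ i, Option (C i)) : Prop :=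
  ∀ i c, κ' i = some c → κ i = some c

/-- The rewrite relation of the world determined by a selection `σ`:
either a regular step, or a probabilistic step using the alternative chosen by `σ`. -/
def WStep {ι : Type*} {C : ι → Type*} {A : Type*}
    (reg : A → A → Prop) (step : ∀ i, C i → A → A → Prop)
    (σ : ∀ i, C i) (s t : A) : Prop :=
  reg s t ∨ ∃ i, step i (σ i) s t

/-- The probabilistic rewrite relation on pairs of a term and a composite choice. -/
def PStep {ι : Type*} [DecidableEq ι] {C : ι → Type*} {A : Type*}
    (reg : A → A → Prop) (step : ∀ i, C i → A → A → Prop)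
    (x y : A × (∀ i, Option (C i))) : Prop :=
  (reg x.1 y.1 ∧ y.2 = x.2) ∨
  ∃ i c, step i c x.1 y.1 ∧ (x.2 i = none ∨ x.2 i = some c) ∧
    y.2 = Function.update x.2 i (some c)

/-- Theorem 1 (correctness of probabilistic rewriting): for all terms `s, t` and
every selection `σ`, `s →_σ* t` iff there is a composite choice `κ'` with
`⟨s, ∅⟩ ⇀* ⟨t, κ'⟩` and `σ` extends `κ'`. -/
theorem correctness_of_probabilistic_rewriting
    {ι : Type*} [Fintype ι] [DecidableEq ι]
    {C : ι → Type*} [∀ i, Fintype (C i)] [∀ i, Nonempty (C i)]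
    (p : ∀ i, C i → ℝ) (hp : ∀ i c, 0 ≤ p i c) (hp1 : ∀ i, ∑ c, p i c = 1)
    {A : Type*} (reg : A → A → Prop) (step : ∀ i, C i → A → A → Prop)
    (s t : A) (σ : ∀ i, C i) :
    Relation.ReflTransGen (WStep reg step σ) s t ↔
      ∃ κ' : ∀ i, Option (C i),
        Relation.ReflTransGen (PStep reg step) (s, fun _ => none) (t, κ') ∧
        Extends σ κ' := by
  constructor
  · intro h
    have key : ∀ κ : ∀ i, Option (C i), Extends σ κ →
        ∃ κ', Relation.ReflTransGen (PStep reg step) (s, κ) (t, κ') ∧ Extends σ κ' := by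
      induction h with
      | refl => exact fun κ hκ => ⟨κ, Relation.ReflTransGen.refl, hκ⟩
      | @tail u v _ hst ih =>
        intro κ hκ
        obtain ⟨κ', hchain, hext⟩ := ih κ hκ
        cases hst with
        | inl hreg =>
          exact ⟨κ', hchain.tail (Or.inl ⟨hreg, rfl⟩), hext⟩
        | inr hstep =>
          obtain ⟨i, hi⟩ := hstep
          refine ⟨Function.update κ' i (some (σ i)),
            hchain.tail (Or.inr ⟨i, σ i, hi, ?_, rfl⟩), ?_⟩
          · cases hki : κ' i with
            | none => exact Or.inl hki
            | some c => exact Or.inr (by rw [hext i c hki]; exact hki)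
          · intro j c hj
            by_cases hij : j = i
            · subst hij
              rw [Function.update_self] at hj
              exact Option.some_inj.mp hj
            · rw [Function.update_of_ne hij] at hj
              exact hext j c hj
    exact key (fun _ => none) (fun i c h => by simp at h)
  · rintro ⟨κ', hchain, hext⟩
    have key : ∀ x y : A × (∀ i, Option (C i)),
        Relation.ReflTransGen (PStep reg step) x y → Extends σ y.2 →
        Relation.ReflTransGen (WStep reg step σ) x.1 y.1 ∧ Extends σ x.2 := by
      intro x y h
      induction h with
      | refl => exact fun h => ⟨Relation.ReflTransGen.refl, h⟩
      | @tail u v _ hst ih =>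
        intro hv
        have hu : Extends σ u.2 := by
          intro j c hj
          cases hst with
          | inl h => exact hv j c (h.2 ▸ hj)
          | inr h =>
            obtain ⟨i, c', _, hor, hupd⟩ := h
            by_cases hij : j = i
            · subst hij
              have hs : σ j = c' := hv j c' (by rw [hupd, Function.update_self])
              cases hor with
              | inl hn => rw [hn] at hj; exact absurd hj (by simp)
              | inr hs' =>
                have : c' = c := Option.some_inj.mp (hs'.symm.trans hj)
                rw [hs, this]
            · exact hv j c (by rw [hupd, Function.update_of_ne hij]; exact hj)
        obtain ⟨hchain', _⟩ := ih hu
        refine ⟨hchain'.tail ?_, (ih hu).2⟩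
        cases hst with
        | inl h => exact Or.inl h.1
        | inr h =>
          obtain ⟨i, c, hstep, _, hupd⟩ := h
          have : v.2 i = some c := by rw [hupd, Function.update_self]
          have := hv i c this
          exact Or.inr ⟨i, this ▸ hstep⟩
    exact (key _ _ hchain hext).1
end

section
/- Corollary 1 (covering set of explanations): for all terms s, t : A, the set E = {κ | ⟨s, ∅⟩ ⇀* ⟨t, κ⟩} is a covering set of explanations for s reducing to t, that is: (i) for every κ ∈ E and every selection σ extending κ, s →_σ* t; and (ii) for every selection σ with s →_σ* t, there exists κ ∈ E such that σ extends κ. -/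
open scoped Classical

theorem aux_back {ι : Type*} [DecidableEq ι] {C : ι → Type*} {A : Type*}
    (reg : A → A → Prop) (step : ∀ i, C i → A → A → Prop)
    (σ : ∀ i, C i) :
    ∀ x y : A × (∀ i, Option (C i)),
      Relation.ReflTransGen (PStep reg step) x y → Extends σ y.2 →
      Extends σ x.2 ∧ Relation.ReflTransGen (WStep reg step σ) x.1 y.1 := by
  intro x y h
  induction h with
  | refl => intro h; exact ⟨h, Relation.ReflTransGen.refl⟩
  | tail hab hby ih =>
    rename_i b c
    intro hext
    rcases hby with ⟨hreg, heq⟩ | ⟨i, ch, hst, hbi, heq⟩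
    · have hb : Extends σ b.2 := heq ▸ hext
      obtain ⟨h1, h2⟩ := ih hb
      exact ⟨h1, h2.tail (Or.inl hreg)⟩
    · have hσi : σ i = ch := by
        apply hext i
        rw [heq]; simp [Function.update]
      have hb : Extends σ b.2 := by
        intro j d hd
        by_cases hji : j = i
        · subst hji
          rcases hbi with h | h
          · rw [h] at hd; exact absurd hd (by simp)
          · rw [h] at hd; injection hd with hd; rw [← hd]; exact hσi
        · apply hext j
          rw [heq, Function.update_of_ne hji]; exact hd
      obtain ⟨h1, h2⟩ := ih hb
      exact ⟨h1, h2.tail (Or.inr ⟨i, hσi ▸ hst⟩)⟩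

/-- Corollary 1 (covering set of explanations): the set
`E = {κ | ⟨s, ∅⟩ ⇀* ⟨t, κ⟩}` is a covering set of explanations for `s →* t`:
(i) for every `κ ∈ E` and every selection `σ` extending `κ`, `s →_σ* t`;
(ii) for every selection `σ` with `s →_σ* t` there is `κ ∈ E` extended by `σ`. -/
theorem covering_set_of_explanations
    {ι : Type*} [Fintype ι] [DecidableEq ι]
    {C : ι → Type*} [∀ i, Fintype (C i)] [∀ i, Nonempty (C i)]
    (p : ∀ i, C i → ℝ) (hp : ∀ i c, 0 ≤ p i c) (hp1 : ∀ i, ∑ c, p i c = 1)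
    {A : Type*} (reg : A → A → Prop) (step : ∀ i, C i → A → A → Prop)
    (s t : A) :
    (∀ κ : ∀ i, Option (C i),
        κ ∈ {κ : ∀ i, Option (C i) |
          Relation.ReflTransGen (PStep reg step) (s, fun _ => none) (t, κ)} →
        ∀ σ : ∀ i, C i, Extends σ κ →
          Relation.ReflTransGen (WStep reg step σ) s t) ∧
    (∀ σ : ∀ i, C i, Relation.ReflTransGen (WStep reg step σ) s t →
        ∃ κ ∈ {κ : ∀ i, Option (C i) |
          Relation.ReflTransGen (PStep reg step) (s, fun _ => none) (t, κ)},
          Extends σ κ) := by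
  constructor
  · intro κ hκ σ hext
    exact (aux_back reg step σ _ _ hκ hext).2
  · intro σ h
    suffices H : ∀ u, Relation.ReflTransGen (WStep reg step σ) s u →
        ∃ κ, Relation.ReflTransGen (PStep reg step) (s, fun _ => none) (u, κ) ∧
          Extends σ κ by
      obtain ⟨κ, h1, h2⟩ := H t h
      exact ⟨κ, h1, h2⟩
    intro u hu
    induction hu with
    | refl => exact ⟨fun _ => none, Relation.ReflTransGen.refl, fun i c h => by simp at h⟩
    | tail hab hbc ih =>
      rename_i b c
      obtain ⟨κ, h1, h2⟩ := ih
      rcases hbc with hreg | ⟨i, hst⟩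
      · exact ⟨κ, h1.tail (Or.inl ⟨hreg, rfl⟩), h2⟩
      · refine ⟨Function.update κ i (some (σ i)),
          h1.tail (Or.inr ⟨i, σ i, hst, ?_, rfl⟩), ?_⟩
        · show κ i = none ∨ κ i = some (σ i)
          cases hκi : κ i with
          | none => exact Or.inl rfl
          | some d => exact Or.inr (by rw [h2 i d hκi])
        · intro j d hd
          by_cases hji : j = i
          · subst hji
            rw [Function.update_self] at hd
            exact (Option.some_injective _ hd)
          · exact h2 j d (by rwa [Function.update_of_ne hji] at hd)
end

section
/- Lemma 2: let K be a finite, mutually incompatible set of composite choices. Then the sum of the probabilities of all selections extending some element of K equals the sum of the probabilities of the elements of K, i.e., ∑_{σ a selection such that ∃ κ ∈ K, σ extends κ} P(σ) = ∑_{κ ∈ K} P(κ). -/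
open scoped Classical

/-- Lemma 2: for a finite, mutually incompatible set `K` of composite choices,
the sum of the probabilities of the selections extending some element of `K`
equals the sum of the probabilities of the elements of `K`. -/
theorem sum_worlds_of_mutually_incompatible
    {ι : Type*} [Fintype ι] [DecidableEq ι]
    {C : ι → Type*} [∀ i, Fintype (C i)] [∀ i, Nonempty (C i)]
    (p : ∀ i, C i → ℝ) (hp : ∀ i c, 0 ≤ p i c) (hp1 : ∀ i, ∑ c, p i c = 1)
    (K : Finset (∀ i, Option (C i)))
    (hK : MutuallyIncompatible (↑K : Set (∀ i, Option (C i)))) :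
    ∑ σ ∈ Finset.univ.filter (fun σ : ∀ i, C i => ∃ κ ∈ K, Extends σ κ),
        Psel p σ
      = ∑ κ ∈ K, Pcc p κ := by
    classical
  have key : ∀ κ : ∀ i, Option (C i),
      ∑ σ ∈ Finset.univ.filter (fun σ : ∀ i, C i => Extends σ κ), Psel p σ = Pcc p κ := by
    intro κ
    have hset : Finset.univ.filter (fun σ : ∀ i, C i => Extends σ κ)
        = Fintype.piFinset (fun i => (κ i).elim Finset.univ (fun c => {c})) := by
      ext σ
      simp only [Finset.mem_filter, Finset.mem_univ, true_and, Fintype.mem_piFinset]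
      constructor
      · intro h i
        cases hk : κ i with
        | none => simp
        | some c => simp [h i c hk]
      · intro h i c hk
        have := h i
        rw [hk] at this
        simpa using this
    have hP : Pcc p κ = ∏ i, ∑ c ∈ (κ i).elim Finset.univ (fun c => {c}), p i c := by
      unfold Pcc
      refine Finset.prod_congr rfl fun i _ => ?_
      cases κ i <;> simp [hp1 i]
    rw [hset, hP, Finset.prod_univ_sum]
    rfl
  have hcover : Finset.univ.filter (fun σ : ∀ i, C i => ∃ κ ∈ K, Extends σ κ)
      = K.biUnion (fun κ => Finset.univ.filter (fun σ : ∀ i, C i => Extends σ κ)) := by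
    ext σ
    simp [Finset.mem_biUnion]
  have hdisj : ∀ κ₁ ∈ K, ∀ κ₂ ∈ K, κ₁ ≠ κ₂ →
      Disjoint (Finset.univ.filter (fun σ : ∀ i, C i => Extends σ κ₁))
        (Finset.univ.filter (fun σ : ∀ i, C i => Extends σ κ₂)) := by
    intro κ₁ h₁ κ₂ h₂ hne
    obtain ⟨i, c₁, c₂, hcne, hk1, hk2⟩ := hK κ₁ h₁ κ₂ h₂ hne
    rw [Finset.disjoint_left]
    intro σ hσ1 hσ2
    simp only [Finset.mem_filter] at hσ1 hσ2
    exact hcne ((hσ1.2 i c₁ hk1).symm.trans (hσ2.2 i c₂ hk2))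
  rw [hcover, Finset.sum_biUnion hdisj]
  exact Finset.sum_congr rfl fun κ _ => key κ
end

section
/- Proposition 1 (event form): let E be a set of selections and K a finite, mutually incompatible set of composite choices such that (i) every selection extending some κ ∈ K belongs to E (each κ ∈ K is an explanation for E) and (ii) every σ ∈ E extends some κ ∈ K (K is covering for E). Then ∑_{σ ∈ E} P(σ) = ∑_{κ ∈ K} P(κ). -/
open scoped Classical

/-- Proposition 1 (event form): if every element of `K` is an explanation for
the event `E` and `K` is covering for `E`, and `K` is mutually incompatible,
then `P(E)` is the sum of the probabilities of the explanations in `K`. -/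
theorem prob_event_eq_sum_explanations
    {ι : Type*} [Fintype ι] [DecidableEq ι]
    {C : ι → Type*} [∀ i, Fintype (C i)] [∀ i, Nonempty (C i)]
    (p : ∀ i, C i → ℝ) (hp : ∀ i c, 0 ≤ p i c) (hp1 : ∀ i, ∑ c, p i c = 1)
    (E : Finset (∀ i, C i)) (K : Finset (∀ i, Option (C i)))
    (hK : MutuallyIncompatible (↑K : Set (∀ i, Option (C i))))
    (hexpl : ∀ κ ∈ K, ∀ σ : ∀ i, C i, Extends σ κ → σ ∈ E)
    (hcover : ∀ σ ∈ E, ∃ κ ∈ K, Extends σ κ) :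
    ∑ σ ∈ E, Psel p σ = ∑ κ ∈ K, Pcc p κ := by
  classical
  -- the extension finset of a composite choice
  set t : (∀ i, Option (C i)) → ∀ i, Finset (C i) :=
    fun κ i => (κ i).elim Finset.univ (fun c => {c}) with ht
  have hmem : ∀ κ (σ : ∀ i, C i), σ ∈ Fintype.piFinset (t κ) ↔ Extends σ κ := by
    intro κ σ
    simp only [Fintype.mem_piFinset, ht]
    constructor
    · intro h i c hc
      have := h i
      rw [hc] at this
      simpa using this
    · intro h i
      cases hκ : κ i with
      | none => simp
      | some c => simp [h i c hκ]
  have hsum : ∀ κ, ∑ σ ∈ Fintype.piFinset (t κ), Psel p σ = Pcc p κ := by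
    intro κ
    unfold Psel Pcc
    rw [← Finset.prod_univ_sum]
    refine Finset.prod_congr rfl fun i _ => ?_
    cases hκ : κ i with
    | none => simp [ht, hκ, hp1 i]
    | some c => simp [ht, hκ]
  have hE : E = K.biUnion (fun κ => Fintype.piFinset (t κ)) := by
    ext σ
    simp only [Finset.mem_biUnion]
    constructor
    · intro hσ
      obtain ⟨κ, hκ, hext⟩ := hcover σ hσ
      exact ⟨κ, hκ, (hmem κ σ).2 hext⟩
    · rintro ⟨κ, hκ, hσ⟩
      exact hexpl κ hκ σ ((hmem κ σ).1 hσ)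
  rw [hE, Finset.sum_biUnion]
  · exact Finset.sum_congr rfl fun κ _ => hsum κ
  · intro κ₁ h₁ κ₂ h₂ hne
    refine Finset.disjoint_left.2 fun σ hσ₁ hσ₂ => ?_
    obtain ⟨i, c₁, c₂, hcne, hk₁, hk₂⟩ := hK κ₁ h₁ κ₂ h₂ hne
    have e₁ := (hmem κ₁ σ).1 hσ₁ i c₁ hk₁
    have e₂ := (hmem κ₂ σ).1 hσ₂ i c₂ hk₂
    exact hcne (e₁ ▸ e₂ ▸ rfl)
end

section
/- Proposition 1 (rewriting form): let s, t : A and let K = {κ | ⟨s, ∅⟩ ⇀* ⟨t, κ⟩} be the set of explanations computed by probabilistic rewriting (a finite set, since ι and each C i are finite). If K is mutually incompatible, then the probability of s reducing to t equals the sum of the probabilities of its explanations: ∑_{σ a selection with s →_σ* t} P(σ) = ∑_{κ ∈ K} P(κ). -/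
/-!
A selection `σ` lets `s` reach `t` in its world exactly when it extends some explanation
`κ ∈ K`: a world reduction is replayed by probabilistic rewriting, recording along the way
the alternatives `σ` used, and conversely a probabilistic reduction whose recorded choices
agree with `σ` is a world reduction. So the selections reaching `t` are the union over
`κ ∈ K` of the selections extending `κ`; this union is disjoint because `K` is mutually
incompatible, and the selections extending `κ` have total probability `P(κ)` since the
probabilities of each unassigned rule sum to one.
-/

open scoped Classical

open Relation

section Choices

variable {ι : Type*} {C : ι → Type*}

theorem CCSubset.refl (κ : ∀ i, Option (C i)) : CCSubset κ κ :=
  fun _ _ h => h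

theorem CCSubset.trans {κ₁ κ₂ κ₃ : ∀ i, Option (C i)} (h₁₂ : CCSubset κ₁ κ₂)
    (h₂₃ : CCSubset κ₂ κ₃) : CCSubset κ₁ κ₃ :=
  fun i c h => h₂₃ i c (h₁₂ i c h)

theorem Extends.mono {σ : ∀ i, C i} {κ' κ : ∀ i, Option (C i)} (h : Extends σ κ)
    (hsub : CCSubset κ' κ) : Extends σ κ' :=
  fun i c hc => h i c (hsub i c hc)

end Choices

section Rewriting

variable {ι : Type*} [DecidableEq ι] {C : ι → Type*} {A : Type*}
  {reg : A → A → Prop} {step : ∀ i, C i → A → A → Prop}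

theorem PStep.ccSubset {x y : A × (∀ i, Option (C i))} (h : PStep reg step x y) :
    CCSubset x.2 y.2 := by
  rcases h with ⟨-, hy⟩ | ⟨i, c, -, hfree, hy⟩
  · rw [hy]
    exact CCSubset.refl _
  · intro j c' hj
    rw [hy]
    rcases eq_or_ne j i with rfl | hne
    · rcases hfree with h | h <;> simp_all
    · rwa [Function.update_of_ne hne]

theorem Relation.ReflTransGen.ccSubset_of_pStep {x y : A × (∀ i, Option (C i))}
    (h : ReflTransGen (PStep reg step) x y) : CCSubset x.2 y.2 := by
  induction h with
  | refl => exact CCSubset.refl _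
  | tail _ hstep ih => exact ih.trans hstep.ccSubset

theorem Relation.ReflTransGen.wStep_of_pStep {σ : ∀ i, C i} {x y : A × (∀ i, Option (C i))}
    (h : ReflTransGen (PStep reg step) x y) (hσ : Extends σ y.2) :
    ReflTransGen (WStep reg step σ) x.1 y.1 := by
  induction h with
  | refl => exact ReflTransGen.refl
  | tail _ hbc ih =>
    refine (ih (hσ.mono hbc.ccSubset)).tail ?_
    rcases hbc with ⟨hreg, -⟩ | ⟨i, c', hstep, -, hc⟩
    · exact Or.inl hreg
    · have hσi : σ i = c' := hσ i c' (by simp [hc])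
      exact Or.inr ⟨i, hσi ▸ hstep⟩

theorem Relation.ReflTransGen.exists_pStep_of_wStep {σ : ∀ i, C i} {s t : A}
    (h : ReflTransGen (WStep reg step σ) s t) :
    ∃ κ : ∀ i, Option (C i), ReflTransGen (PStep reg step) (s, fun _ => none) (t, κ) ∧
      Extends σ κ := by
  induction h with
  | refl => exact ⟨fun _ => none, ReflTransGen.refl, fun _ _ h => by simp at h⟩
  | tail _ hbc ih =>
    obtain ⟨κ, hκ, hσ⟩ := ih
    rcases hbc with hreg | ⟨i, hstep⟩
    · exact ⟨κ, hκ.tail (Or.inl ⟨hreg, rfl⟩), hσ⟩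
    · have hfree : κ i = none ∨ κ i = some (σ i) := by
        cases hκi : κ i with
        | none => exact Or.inl rfl
        | some c => exact Or.inr (congrArg some (hσ i c hκi).symm)
      refine ⟨Function.update κ i (some (σ i)), hκ.tail (Or.inr ⟨i, σ i, hstep, hfree, rfl⟩),
        fun j c hj => ?_⟩
      rcases eq_or_ne j i with rfl | hne
      · simpa using hj
      · exact hσ j c (by rwa [Function.update_of_ne hne] at hj)

theorem reflTransGen_wStep_iff_exists_explanation {σ : ∀ i, C i} {s t : A} :
    ReflTransGen (WStep reg step σ) s t ↔
      ∃ κ : ∀ i, Option (C i), ReflTransGen (PStep reg step) (s, fun _ => none) (t, κ) ∧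
        Extends σ κ :=
  ⟨fun h => h.exists_pStep_of_wStep, fun ⟨_, hκ, hσ⟩ => hκ.wStep_of_pStep hσ⟩

end Rewriting

section Selections

variable {ι : Type*} [Fintype ι] [DecidableEq ι] {C : ι → Type*} [∀ i, Fintype (C i)]

theorem filter_extends_eq_piFinset (κ : ∀ i, Option (C i)) :
    Finset.univ.filter (fun σ : ∀ i, C i => Extends σ κ) =
      Fintype.piFinset fun i => (κ i).elim Finset.univ singleton := by
  ext σ
  simp only [Finset.mem_filter, Finset.mem_univ, true_and, Fintype.mem_piFinset]
  refine ⟨fun h i => ?_, fun h i c hc => by simpa [hc] using h i⟩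
  cases hκi : κ i with
  | none => simp
  | some c => simp [h i c hκi]

theorem sum_psel_filter_extends (p : ∀ i, C i → ℝ) (hp1 : ∀ i, ∑ c, p i c = 1)
    (κ : ∀ i, Option (C i)) :
    ∑ σ ∈ Finset.univ.filter (fun σ : ∀ i, C i => Extends σ κ), Psel p σ = Pcc p κ := by
  simp only [filter_extends_eq_piFinset, Psel, Pcc]
  rw [← Finset.prod_univ_sum]
  refine Finset.prod_congr rfl fun i _ => ?_
  cases κ i with
  | none => exact hp1 i
  | some c => simp

theorem Incompatible.disjoint_filter_extends {κ₁ κ₂ : ∀ i, Option (C i)} (h : Incompatible κ₁ κ₂) :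
    Disjoint (Finset.univ.filter fun σ : ∀ i, C i => Extends σ κ₁)
      (Finset.univ.filter fun σ : ∀ i, C i => Extends σ κ₂) := by
  obtain ⟨i, c₁, c₂, hne, h₁, h₂⟩ := h
  refine Finset.disjoint_filter.2 fun σ _ hσ₁ hσ₂ => hne ?_
  rw [← hσ₁ i c₁ h₁, ← hσ₂ i c₂ h₂]

end Selections

theorem prob_reachability_eq_sum_explanations_general
    {ι : Type*} [Fintype ι] [DecidableEq ι]
    {C : ι → Type*} [∀ i, Fintype (C i)]
    (p : ∀ i, C i → ℝ) (hp1 : ∀ i, ∑ c, p i c = 1)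
    {A : Type*} (reg : A → A → Prop) (step : ∀ i, C i → A → A → Prop)
    (s t : A)
    (K : Finset (∀ i, Option (C i)))
    (hKdef : ∀ κ : ∀ i, Option (C i), κ ∈ K ↔
      Relation.ReflTransGen (PStep reg step) (s, fun _ => none) (t, κ))
    (hK : MutuallyIncompatible (↑K : Set (∀ i, Option (C i)))) :
    ∑ σ ∈ Finset.univ.filter
        (fun σ : ∀ i, C i => Relation.ReflTransGen (WStep reg step σ) s t),
        Psel p σ
      = ∑ κ ∈ K, Pcc p κ := by
  have hreach : Finset.univ.filter
      (fun σ : ∀ i, C i => ReflTransGen (WStep reg step σ) s t) =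
        K.biUnion fun κ => Finset.univ.filter fun σ => Extends σ κ := by
    ext σ
    simp [reflTransGen_wStep_iff_exists_explanation, hKdef]
  rw [hreach, Finset.sum_biUnion]
  · exact Finset.sum_congr rfl fun κ _ => sum_psel_filter_extends p hp1 κ
  · exact fun _ h₁ _ h₂ hne => (hK _ h₁ _ h₂ hne).disjoint_filter_extends

/-- Proposition 1 (rewriting form): if the set of explanations computed by
probabilistic rewriting for `s →* t` is mutually incompatible, then the
probability of `s` reducing to `t` equals the sum of the probabilities of
its explanations. -/
theorem prob_reachability_eq_sum_explanations
    {ι : Type*} [Fintype ι] [DecidableEq ι]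
    {C : ι → Type*} [∀ i, Fintype (C i)] [∀ i, Nonempty (C i)]
    (p : ∀ i, C i → ℝ) (hp : ∀ i c, 0 ≤ p i c) (hp1 : ∀ i, ∑ c, p i c = 1)
    {A : Type*} (reg : A → A → Prop) (step : ∀ i, C i → A → A → Prop)
    (s t : A)
    (K : Finset (∀ i, Option (C i)))
    (hKdef : ∀ κ : ∀ i, Option (C i), κ ∈ K ↔
      Relation.ReflTransGen (PStep reg step) (s, fun _ => none) (t, κ))
    (hK : MutuallyIncompatible (↑K : Set (∀ i, Option (C i)))) :
    ∑ σ ∈ Finset.univ.filter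
        (fun σ : ∀ i, C i => Relation.ReflTransGen (WStep reg step σ) s t),
        Psel p σ
      = ∑ κ ∈ K, Pcc p κ :=
  prob_reachability_eq_sum_explanations_general p hp1 reg step s t K hKdef hK
end

section
/- Well-definedness of the measure μ: if K₁ and K₂ are finite, mutually incompatible sets of composite choices that are equivalent (a selection extends some element of K₁ if and only if it extends some element of K₂), then ∑_{κ ∈ K₁} P(κ) = ∑_{κ ∈ K₂} P(κ). -/
open scoped Classical

lemma pcc_eq_sum {ι : Type*} [Fintype ι] {C : ι → Type*} [∀ i, Fintype (C i)]
    (p : ∀ i, C i → ℝ) (hp1 : ∀ i, ∑ c, p i c = 1) (κ : ∀ i, Option (C i)) :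
    Pcc p κ = ∑ σ : ∀ i, C i, if Extends σ κ then Psel p σ else 0 := by
  classical
  have key : ∀ σ : ∀ i, C i,
      (if Extends σ κ then Psel p σ else 0)
        = ∏ i, (if ∀ c, κ i = some c → σ i = c then p i (σ i) else 0) := by
    intro σ
    by_cases h : Extends σ κ
    · rw [if_pos h]
      exact Finset.prod_congr rfl fun i _ => by
        rw [if_pos (fun c hc => h i c hc)]
    · rw [if_neg h]
      simp only [Extends, not_forall] at h
      obtain ⟨i, c, hc, hne⟩ := h
      refine (Finset.prod_eq_zero (Finset.mem_univ i) ?_).symm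
      rw [if_neg]
      push_neg
      exact ⟨c, hc, hne⟩
  rw [Finset.sum_congr rfl fun σ _ => key σ]
  have := Finset.prod_univ_sum (fun _ : ι => (Finset.univ : Finset (C _)))
    (fun i c => if ∀ c', κ i = some c' → c = c' then p i c else 0)
  rw [Fintype.piFinset_univ] at this
  rw [← this]
  refine Finset.prod_congr rfl fun i _ => ?_
  rcases h : κ i with _ | c₀
  · simp [h, hp1 i]
  · simp [h]

lemma sum_pcc_eq {ι : Type*} [Fintype ι] {C : ι → Type*} [∀ i, Fintype (C i)]
    (p : ∀ i, C i → ℝ) (hp1 : ∀ i, ∑ c, p i c = 1)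
    (K : Finset (∀ i, Option (C i)))
    (hK : MutuallyIncompatible (↑K : Set (∀ i, Option (C i)))) :
    ∑ κ ∈ K, Pcc p κ
      = ∑ σ : ∀ i, C i, if ∃ κ ∈ K, Extends σ κ then Psel p σ else 0 := by
  classical
  rw [Finset.sum_congr rfl fun κ _ => pcc_eq_sum p hp1 κ, Finset.sum_comm]
  refine Finset.sum_congr rfl fun σ _ => ?_
  by_cases h : ∃ κ ∈ K, Extends σ κ
  · rw [if_pos h]
    obtain ⟨κ₀, hκ₀, hext⟩ := h
    rw [Finset.sum_eq_single_of_mem κ₀ hκ₀]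
    · rw [if_pos hext]
    · intro κ hκ hne
      rw [if_neg]
      intro hext'
      obtain ⟨i, c₁, c₂, hc, h1, h2⟩ := hK κ hκ κ₀ hκ₀ hne
      exact hc ((hext' i c₁ h1).symm.trans (hext i c₂ h2))
  · rw [if_neg h]
    refine Finset.sum_eq_zero fun κ hκ => if_neg fun hext => h ⟨κ, hκ, hext⟩

/-- Well-definedness of the measure `μ`: two equivalent finite, mutually
incompatible sets of composite choices have the same total probability. -/
theorem measure_well_defined
    {ι : Type*} [Fintype ι] [DecidableEq ι]
    {C : ι → Type*} [∀ i, Fintype (C i)] [∀ i, Nonempty (C i)]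
    (p : ∀ i, C i → ℝ) (hp : ∀ i c, 0 ≤ p i c) (hp1 : ∀ i, ∑ c, p i c = 1)
    (K₁ K₂ : Finset (∀ i, Option (C i)))
    (hK₁ : MutuallyIncompatible (↑K₁ : Set (∀ i, Option (C i))))
    (hK₂ : MutuallyIncompatible (↑K₂ : Set (∀ i, Option (C i))))
    (hequiv : ∀ σ : ∀ i, C i, (∃ κ ∈ K₁, Extends σ κ) ↔ (∃ κ ∈ K₂, Extends σ κ)) :
    ∑ κ ∈ K₁, Pcc p κ = ∑ κ ∈ K₂, Pcc p κ := by
  rw [sum_pcc_eq p hp1 K₁ hK₁, sum_pcc_eq p hp1 K₂ hK₂]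
  exact Finset.sum_congr rfl fun σ _ => by rw [if_congr (hequiv σ) rfl rfl]
end
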